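/- arXiv:2204.01382 — 5 statements merged into one kernel-verified Lean document; each statement's English description precedes it below -/
import Mathlib

section
/- Let (E, ‖·‖) be a normed vector space, let (β_k)_{k≥0} be a sequence with β_k ∈ [0,1] for all k, β_k → 0, and Σ_{k=0}^∞ β_k = ∞, and let (y_k)_{k≥0} be a sequence in E with y_k → y. Then the sequence defined by any initial x_0 ∈ E and x_{k+1} = (1 − β_k) x_k + β_k y_k converges to y. -/
open Filter

/-- If `β_k ∈ [0,1]`, `β_k → 0`, `Σ β_k = ∞`, and `y_k → y`, then the
recursion `x_{k+1} = (1 - β_k) x_k + β_k y_k` converges to `y`. -/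
theorem stmt7
    {E : Type*} [NormedAddCommGroup E] [NormedSpace ℝ E]
    (β : ℕ → ℝ) (hβ01 : ∀ k, β k ∈ Set.Icc (0 : ℝ) 1)
    (hβ0 : Tendsto β atTop (nhds 0))
    (hβsum : Tendsto (fun n => ∑ k ∈ Finset.range n, β k) atTop atTop)
    (y : ℕ → E) (ylim : E) (hy : Tendsto y atTop (nhds ylim))
    (x : ℕ → E) (hx : ∀ k, x (k + 1) = (1 - β k) • x k + β k • y k) :
    Tendsto x atTop (nhds ylim) := by
  rw [tendsto_iff_norm_sub_tendsto_zero]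
  set d : ℕ → ℝ := fun k => ‖x k - ylim‖ with hd
  have hdnn : ∀ k, 0 ≤ d k := fun k => norm_nonneg _
  have hrec : ∀ k, d (k + 1) ≤ (1 - β k) * d k + β k * ‖y k - ylim‖ := by
    intro k
    have h1 : x (k + 1) - ylim = (1 - β k) • (x k - ylim) + β k • (y k - ylim) := by
      rw [hx k]; module
    have hb := hβ01 k
    calc d (k + 1) = ‖(1 - β k) • (x k - ylim) + β k • (y k - ylim)‖ := by
          show ‖x (k + 1) - ylim‖ = _; rw [h1]
      _ ≤ ‖(1 - β k) • (x k - ylim)‖ + ‖β k • (y k - ylim)‖ := norm_add_le _ _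
      _ = (1 - β k) * d k + β k * ‖y k - ylim‖ := by
          rw [norm_smul, norm_smul, Real.norm_of_nonneg (by linarith [hb.2]),
            Real.norm_of_nonneg hb.1]
  rw [Metric.tendsto_atTop]
  intro ε hε
  obtain ⟨N, hN⟩ := Metric.tendsto_atTop.mp (tendsto_iff_norm_sub_tendsto_zero.mp hy)
    (ε / 2) (by positivity)
  have hyN : ∀ n ≥ N, ‖y n - ylim‖ ≤ ε / 2 := by
    intro n hn
    have := hN n hn
    rw [Real.dist_eq, sub_zero, abs_of_nonneg (norm_nonneg _)] at this
    linarith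
  have key : ∀ m, d (N + m) ≤ ε / 2 +
      Real.exp (-(∑ j ∈ Finset.range m, β (N + j))) * d N := by
    intro m
    induction m with
    | zero => simp; linarith
    | succ m ih =>
      have hb := hβ01 (N + m)
      have hexp : 1 - β (N + m) ≤ Real.exp (-(β (N + m))) := by
        have := Real.add_one_le_exp (-(β (N + m)))
        linarith
      have hEnn : (0:ℝ) ≤ Real.exp (-(∑ j ∈ Finset.range m, β (N + j))) * d N :=
        mul_nonneg (Real.exp_pos _).le (hdnn N)
      calc d (N + m + 1) ≤ (1 - β (N + m)) * d (N + m) + β (N + m) * ‖y (N + m) - ylim‖ :=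
            hrec _
        _ ≤ (1 - β (N + m)) * (ε / 2 + Real.exp (-(∑ j ∈ Finset.range m, β (N + j))) * d N)
              + β (N + m) * (ε / 2) := by
            gcongr <;>
              first
                | exact hb.1
                | linarith [hb.2]
                | exact hyN _ (Nat.le_add_right _ _)
        _ = ε / 2 + (1 - β (N + m)) * (Real.exp (-(∑ j ∈ Finset.range m, β (N + j))) * d N) := by
            ring
        _ ≤ ε / 2 + Real.exp (-(β (N + m))) *
              (Real.exp (-(∑ j ∈ Finset.range m, β (N + j))) * d N) := by
            gcongr
        _ = ε / 2 + Real.exp (-(∑ j ∈ Finset.range (m + 1), β (N + j))) * d N := by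
            rw [Finset.sum_range_succ, neg_add, Real.exp_add]; ring
  have hsum' : Tendsto (fun m => ∑ j ∈ Finset.range m, β (N + j)) atTop atTop := by
    have heq : ∀ m, ∑ j ∈ Finset.range m, β (N + j) =
        (∑ k ∈ Finset.range (N + m), β k) - ∑ k ∈ Finset.range N, β k := by
      intro m
      rw [Finset.sum_range_add]
      ring
    simp only [heq]
    apply tendsto_atTop_add_const_right
    exact hβsum.comp (by simpa [add_comm] using tendsto_add_atTop_nat N)
  have hE0 : Tendsto (fun m => Real.exp (-(∑ j ∈ Finset.range m, β (N + j))) * d N)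
      atTop (nhds 0) := by
    have := (Real.tendsto_exp_neg_atTop_nhds_zero.comp hsum').mul_const (d N)
    simpa using this
  obtain ⟨M, hM⟩ := Metric.tendsto_atTop.mp hE0 (ε / 2) (by positivity)
  refine ⟨N + M, fun n hn => ?_⟩
  obtain ⟨m, rfl⟩ := Nat.exists_eq_add_of_le (le_trans (Nat.le_add_right N M) hn)
  have hm : M ≤ m := by omega
  have h1 := key m
  have h2 := hM m hm
  rw [Real.dist_eq, sub_zero] at h2 ⊢
  rw [abs_of_nonneg (hdnn _)]
  have := le_abs_self (Real.exp (-(∑ j ∈ Finset.range m, β (N + j))) * d N)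
  linarith
end

section
/- Let (E, ‖·‖) be a normed vector space, let (β_k)_{k≥0} satisfy β_k ∈ [0,1], β_k → 0, and Σ_{k=0}^∞ β_k = ∞, let K ⊆ ℕ be an infinite set of update times, and for k ∈ ℕ let c_k := |{l < k : l ∈ K}| count the updates before time k. Let (y_k) be a sequence in E such that y_k → y along k ∈ K, and define x_{k+1} = (1 − β_{c_k}) x_k + β_{c_k} y_k if k ∈ K and x_{k+1} = x_k otherwise, from any initial x_0 ∈ E. Then x_k → y as k → ∞. -/
open Filter

/-- Real-valued synchronous step-size lemma: nonnegative `a` with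
`a (n+1) ≤ (1-β n) a n + β n * d n` and `d → 0` tends to zero. -/
lemma stmt8_aux_real (β : ℕ → ℝ) (hβ01 : ∀ k, β k ∈ Set.Icc (0 : ℝ) 1)
    (hβsum : Tendsto (fun n => ∑ k ∈ Finset.range n, β k) atTop atTop)
    (a d : ℕ → ℝ) (ha : ∀ n, 0 ≤ a n) (hd : Tendsto d atTop (nhds 0))
    (hrec : ∀ n, a (n + 1) ≤ (1 - β n) * a n + β n * d n) :
    Tendsto a atTop (nhds 0) := by
  rw [Metric.tendsto_atTop]
  intro ε hε
  have hε' : 0 < ε / 2 := by linarith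
  obtain ⟨N, hN⟩ := (Metric.tendsto_atTop.mp hd) (ε / 2) hε'
  have hdle : ∀ n ≥ N, d n ≤ ε / 2 := by
    intro n hn
    have := hN n hn
    rw [Real.dist_eq, sub_zero] at this
    exact le_of_lt (lt_of_abs_lt this)
  set P : ℕ → ℝ := fun n => ∏ k ∈ Finset.Ico N n, (1 - β k) with hP
  have hPnonneg : ∀ n, 0 ≤ P n := by
    intro n
    apply Finset.prod_nonneg
    intro k _
    have := (hβ01 k).2
    linarith
  -- key recursive bound
  have key : ∀ m, a (N + m) - ε / 2 ≤ P (N + m) * (a N - ε / 2) := by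
    intro m
    induction m with
    | zero =>
      simp [hP, Finset.Ico_self]
    | succ m ih =>
      have h1 : a (N + m + 1) ≤ (1 - β (N + m)) * a (N + m) + β (N + m) * d (N + m) :=
        hrec (N + m)
      have h2 : d (N + m) ≤ ε / 2 := hdle (N + m) (Nat.le_add_right N m)
      have hβnn : 0 ≤ β (N + m) := (hβ01 (N + m)).1
      have hβle : β (N + m) ≤ 1 := (hβ01 (N + m)).2
      have h3 : a (N + m + 1) - ε / 2 ≤ (1 - β (N + m)) * (a (N + m) - ε / 2) := by
        nlinarith
      have h4 : (1 - β (N + m)) * (a (N + m) - ε / 2)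
          ≤ (1 - β (N + m)) * (P (N + m) * (a N - ε / 2)) :=
        mul_le_mul_of_nonneg_left ih (by linarith)
      have h5 : P (N + m + 1) = P (N + m) * (1 - β (N + m)) := by
        rw [hP]
        exact Finset.prod_Ico_succ_top (Nat.le_add_right N m) _
      calc a (N + (m + 1)) - ε / 2 ≤ (1 - β (N + m)) * (P (N + m) * (a N - ε / 2)) :=
            h3.trans h4
        _ = P (N + (m + 1)) * (a N - ε / 2) := by
            rw [show N + (m + 1) = N + m + 1 from rfl, h5]; ring
  have key' : ∀ n ≥ N, a n ≤ ε / 2 + P n * a N := by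
    intro n hn
    obtain ⟨m, rfl⟩ := Nat.exists_eq_add_of_le hn
    have h1 := key m
    have h2 : P (N + m) * (a N - ε / 2) ≤ P (N + m) * a N := by
      apply mul_le_mul_of_nonneg_left _ (hPnonneg _)
      linarith
    linarith
  -- P n * a N → 0
  have hPa : Tendsto (fun n => P n * a N) atTop (nhds 0) := by
    have hbound : ∀ n ≥ N, P n ≤ Real.exp ((∑ k ∈ Finset.range N, β k)
        - ∑ k ∈ Finset.range n, β k) := by
      intro n hn
      have : (∑ k ∈ Finset.range N, β k) - ∑ k ∈ Finset.range n, β k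
          = -(∑ k ∈ Finset.Ico N n, β k) := by
        rw [Finset.sum_Ico_eq_sub _ hn]; ring
      rw [this, ← Finset.sum_neg_distrib, Real.exp_sum]
      apply Finset.prod_le_prod
      · intro k _; have := (hβ01 k).2; linarith
      · intro k _
        have := Real.add_one_le_exp (-β k)
        linarith
    have hexp : Tendsto (fun n => Real.exp ((∑ k ∈ Finset.range N, β k)
        - ∑ k ∈ Finset.range n, β k) * a N) atTop (nhds 0) := by
      have h1 : Tendsto (fun n => (∑ k ∈ Finset.range N, β k)
          - ∑ k ∈ Finset.range n, β k) atTop atBot :=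
        tendsto_atBot_add_const_left _ _ (tendsto_neg_atBot_iff.mpr hβsum)
      have h2 := (Real.tendsto_exp_atBot.comp h1).mul_const (a N)
      rwa [zero_mul] at h2
    apply squeeze_zero' (f := fun n => P n * a N) (g := fun n =>
      Real.exp ((∑ k ∈ Finset.range N, β k) - ∑ k ∈ Finset.range n, β k) * a N)
    · exact Eventually.of_forall fun n => mul_nonneg (hPnonneg n) (ha N)
    · filter_upwards [eventually_ge_atTop N] with n hn
      exact mul_le_mul_of_nonneg_right (hbound n hn) (ha N)
    · exact hexp
  obtain ⟨M, hM⟩ := (Metric.tendsto_atTop.mp hPa) (ε / 2) hε'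
  refine ⟨max N M, fun n hn => ?_⟩
  have hnN : n ≥ N := le_trans (le_max_left _ _) hn
  have hnM : n ≥ M := le_trans (le_max_right _ _) hn
  have h1 := key' n hnN
  have h2 := hM n hnM
  rw [Real.dist_eq, sub_zero] at h2
  have h3 : P n * a N < ε / 2 := lt_of_abs_lt h2
  rw [Real.dist_eq, sub_zero, abs_of_nonneg (ha n)]
  linarith

/-- Vector-valued synchronous step-size lemma. -/
lemma stmt8_aux_vec {E : Type*} [NormedAddCommGroup E] [NormedSpace ℝ E]
    (β : ℕ → ℝ) (hβ01 : ∀ k, β k ∈ Set.Icc (0 : ℝ) 1)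
    (hβsum : Tendsto (fun n => ∑ k ∈ Finset.range n, β k) atTop atTop)
    (v : ℕ → E) (ylim : E) (hv : Tendsto v atTop (nhds ylim))
    (w : ℕ → E) (hw : ∀ n, w (n + 1) = (1 - β n) • w n + β n • v n) :
    Tendsto w atTop (nhds ylim) := by
  rw [tendsto_iff_norm_sub_tendsto_zero]
  apply stmt8_aux_real β hβ01 hβsum _ (fun n => ‖v n - ylim‖)
    (fun n => norm_nonneg _)
  · exact tendsto_iff_norm_sub_tendsto_zero.mp hv
  · intro n
    have hid : w (n + 1) - ylim = (1 - β n) • (w n - ylim) + β n • (v n - ylim) := by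
      rw [hw n]; module
    have hβnn : 0 ≤ β n := (hβ01 n).1
    have hβle : β n ≤ 1 := (hβ01 n).2
    calc ‖w (n + 1) - ylim‖
        ≤ ‖(1 - β n) • (w n - ylim)‖ + ‖β n • (v n - ylim)‖ := by
          rw [hid]; exact norm_add_le _ _
      _ = (1 - β n) * ‖w n - ylim‖ + β n * ‖v n - ylim‖ := by
          rw [norm_smul, norm_smul, Real.norm_eq_abs, Real.norm_eq_abs,
            abs_of_nonneg (by linarith : (0:ℝ) ≤ 1 - β n), abs_of_nonneg hβnn]

/-- Asynchronous step-size lemma: updates happen only at the infinitely many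
times in `K`, with step size indexed by the visit counter `c_k = |{l < k : l ∈ K}|`, and
the targets converge along `K`; then `x_k → y`. -/
theorem stmt8
    {E : Type*} [NormedAddCommGroup E] [NormedSpace ℝ E]
    (β : ℕ → ℝ) (hβ01 : ∀ k, β k ∈ Set.Icc (0 : ℝ) 1)
    (hβ0 : Tendsto β atTop (nhds 0))
    (hβsum : Tendsto (fun n => ∑ k ∈ Finset.range n, β k) atTop atTop)
    (K : Set ℕ) [DecidablePred (· ∈ K)] (hK : K.Infinite)
    (c : ℕ → ℕ) (hc : ∀ k, c k = ((Finset.range k).filter (· ∈ K)).card)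
    (y : ℕ → E) (ylim : E)
    (hy : Tendsto y (atTop ⊓ principal K) (nhds ylim))
    (x : ℕ → E)
    (hx : ∀ k, x (k + 1) =
      if k ∈ K then (1 - β (c k)) • x k + β (c k) • y k else x k) :
    Tendsto x atTop (nhds ylim) := by
  let p : ℕ → Prop := fun n => n ∈ K
  have hpinf : (setOf p).Infinite := hK
  -- `c` is `Nat.count p`
  have hcount : ∀ k, c k = Nat.count p k := by
    intro k
    rw [hc k, Nat.count_eq_card_filter_range]
  -- the synchronous sequence
  set w : ℕ → E := fun n =>
    Nat.rec (x 0) (fun n wn => (1 - β n) • wn + β n • y (Nat.nth p n)) n with hwdef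
  have hwrec : ∀ n, w (n + 1) = (1 - β n) • w n + β n • y (Nat.nth p n) := fun n => rfl
  -- targets along the subsequence converge
  have hnth_tendsto : Tendsto (Nat.nth p) atTop (atTop ⊓ principal K) := by
    rw [tendsto_inf]
    constructor
    · exact (Nat.nth_strictMono hpinf).tendsto_atTop
    · rw [tendsto_principal]
      exact Eventually.of_forall fun n => Nat.nth_mem_of_infinite hpinf n
  have hv : Tendsto (fun n => y (Nat.nth p n)) atTop (nhds ylim) := hy.comp hnth_tendsto
  have hwlim : Tendsto w atTop (nhds ylim) :=
    stmt8_aux_vec β hβ01 hβsum _ ylim hv w hwrec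
  -- x k = w (c k)
  have hxw : ∀ k, x k = w (c k) := by
    intro k
    induction k with
    | zero => simp [hcount, Nat.count_zero, hwdef]
    | succ k ih =>
      by_cases hk : k ∈ K
      · have hc1 : c (k + 1) = c k + 1 := by
          rw [hcount, hcount, Nat.count_succ, if_pos hk]
        have hnth : Nat.nth p (c k) = k := by
          rw [hcount]; exact Nat.nth_count hk
        rw [hx k, if_pos hk, hc1, hwrec, hnth, ih]
      · have hc1 : c (k + 1) = c k := by
          rw [hcount, hcount, Nat.count_succ, if_neg hk, Nat.add_zero]
        rw [hx k, if_neg hk, hc1, ih]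
  -- c → ∞
  have hctend : Tendsto c atTop atTop := by
    have : Tendsto (Nat.count p) atTop atTop := by
      apply tendsto_atTop_atTop_of_monotone (Nat.count_monotone p)
      intro b
      refine ⟨Nat.nth p b, ?_⟩
      rw [Nat.count_nth (fun hf => absurd hf hpinf)]
    rw [show c = Nat.count p from funext hcount]
    exact this
  have : Tendsto (fun k => w (c k)) atTop (nhds ylim) := hwlim.comp hctend
  rwa [show x = fun k => w (c k) from funext hxw]
end

section
/- Let S be a finite nonempty set, let A be a finite nonempty set, let r : S × A → ℝ, γ ∈ [0,1), and let p : S × A → Δ(S). Let (β_k) satisfy β_k ∈ [0,1], β_k → 0, Σ_k β_k = ∞, and let (v̂_k : S → ℝ)_{k≥0} be a sequence of functions converging pointwise to v : S → ℝ. Then the sequence of functions Q̂_k : S × A → ℝ defined by any initial Q̂_0 and Q̂_{k+1}(s,a) = (1 − β_k) Q̂_k(s,a) + β_k ( r(s,a) + γ Σ_{s'∈S} p(s'|s,a) v̂_k(s') ) converges pointwise to Q(s,a) := r(s,a) + γ Σ_{s'∈S} p(s'|s,a) v(s'). -/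
/-!
The target `c k = r + γ ∑ p v̂_k` of the update converges, so for every `ε > 0` the error
`e k = |Q̂_k - Q|` eventually satisfies `e (k+1) ≤ (1 - β k) e k + β k ε`. Iterating from such
an index `N` gives `e (N+n) - ε ≤ (∏ (1 - β)) (e N - ε)`, and the product is at most
`exp (-∑ β)`, which tends to `0` because `∑ β = ∞`.
-/

open Filter Finset Topology

lemma Filter.Eventually.of_nat_add {p : ℕ → Prop} (N : ℕ) (h : ∀ᶠ n in atTop, p (N + n)) :
    ∀ᶠ n in atTop, p n := by
  rw [← map_add_atTop_eq_nat N, eventually_map]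
  simpa only [add_comm] using h

lemma tendsto_sum_range_nat_add_atTop {β : ℕ → ℝ}
    (hβ : Tendsto (fun n => ∑ k ∈ range n, β k) atTop atTop) (N : ℕ) :
    Tendsto (fun n => ∑ k ∈ range n, β (N + k)) atTop atTop := by
  have hshift : Tendsto (fun n => ∑ k ∈ range (N + n), β k) atTop atTop :=
    (hβ.comp (tendsto_add_atTop_nat N)).congr fun n => by rw [Function.comp_apply, add_comm]
  simp only [sum_range_add] at hshift
  simpa using tendsto_atTop_add_const_left atTop (-∑ k ∈ range N, β k) hshift

lemma prod_one_sub_le_exp_neg_sum {ι : Type*} (s : Finset ι) {β : ι → ℝ}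
    (hβ : ∀ i ∈ s, β i ≤ 1) : ∏ i ∈ s, (1 - β i) ≤ Real.exp (-∑ i ∈ s, β i) := by
  rw [← sum_neg_distrib, Real.exp_sum]
  exact prod_le_prod (fun i hi => sub_nonneg.2 (hβ i hi)) fun i _ => Real.one_sub_le_exp_neg _

lemma tendsto_prod_range_one_sub_zero {β : ℕ → ℝ} (hβ01 : ∀ k, β k ∈ Set.Icc (0 : ℝ) 1)
    (hβsum : Tendsto (fun n => ∑ k ∈ range n, β k) atTop atTop) :
    Tendsto (fun n => ∏ k ∈ range n, (1 - β k)) atTop (𝓝 0) :=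
  squeeze_zero (fun _ => prod_nonneg fun k _ => sub_nonneg.2 (hβ01 k).2)
    (fun _ => prod_one_sub_le_exp_neg_sum _ fun k _ => (hβ01 k).2)
    (Real.tendsto_exp_atBot.comp (tendsto_neg_atTop_atBot.comp hβsum))

lemma sub_le_prod_one_sub_mul_of_le_one_sub_mul_add {β u : ℕ → ℝ} {ε : ℝ}
    (hβ1 : ∀ k, β k ≤ 1) (hu : ∀ k, u (k + 1) ≤ (1 - β k) * u k + β k * ε) (n : ℕ) :
    u n - ε ≤ (∏ k ∈ range n, (1 - β k)) * (u 0 - ε) := by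
  induction n with
  | zero => simp
  | succ n ih =>
    calc u (n + 1) - ε ≤ (1 - β n) * (u n - ε) := by linarith [hu n]
      _ ≤ (1 - β n) * ((∏ k ∈ range n, (1 - β k)) * (u 0 - ε)) :=
        mul_le_mul_of_nonneg_left ih (sub_nonneg.2 (hβ1 n))
      _ = (∏ k ∈ range (n + 1), (1 - β k)) * (u 0 - ε) := by rw [prod_range_succ]; ring

lemma eventually_lt_of_eventually_le_one_sub_mul_add {β u : ℕ → ℝ} {ε ε' : ℝ}
    (hβ01 : ∀ k, β k ∈ Set.Icc (0 : ℝ) 1)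
    (hβsum : Tendsto (fun n => ∑ k ∈ range n, β k) atTop atTop)
    (hu : ∀ᶠ k in atTop, u (k + 1) ≤ (1 - β k) * u k + β k * ε) (hε : ε < ε') :
    ∀ᶠ n in atTop, u n < ε' := by
  obtain ⟨N, hN⟩ := eventually_atTop.1 hu
  refine Eventually.of_nat_add N ?_
  have hbound := sub_le_prod_one_sub_mul_of_le_one_sub_mul_add (β := fun k => β (N + k))
    (u := fun k => u (N + k)) (fun k => (hβ01 _).2)
    (fun k => hN (N + k) (Nat.le_add_right N k))
  have hsmall : ∀ᶠ n in atTop, (∏ k ∈ range n, (1 - β (N + k))) * (u N - ε) < ε' - ε := by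
    have := (tendsto_prod_range_one_sub_zero (fun k => hβ01 (N + k))
      (tendsto_sum_range_nat_add_atTop hβsum N)).mul_const (u N - ε)
    rw [zero_mul] at this
    exact this.eventually (gt_mem_nhds (sub_pos.2 hε))
  filter_upwards [hsmall] with n hn
  have := hbound n
  simp only [add_zero] at this
  linarith

theorem tendsto_of_eq_one_sub_smul_add_smul {E : Type*} [NormedAddCommGroup E] [NormedSpace ℝ E]
    {β : ℕ → ℝ} (hβ01 : ∀ k, β k ∈ Set.Icc (0 : ℝ) 1)
    (hβsum : Tendsto (fun n => ∑ k ∈ range n, β k) atTop atTop)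
    {x c : ℕ → E} {L : E} (hc : Tendsto c atTop (𝓝 L))
    (hx : ∀ k, x (k + 1) = (1 - β k) • x k + β k • c k) :
    Tendsto x atTop (𝓝 L) := by
  have hstep : ∀ k, ‖x (k + 1) - L‖ ≤ (1 - β k) * ‖x k - L‖ + β k * ‖c k - L‖ := by
    intro k
    have hsplit : x (k + 1) - L = (1 - β k) • (x k - L) + β k • (c k - L) := by
      rw [hx k]; module
    rw [hsplit]
    refine (norm_add_le _ _).trans_eq ?_
    rw [norm_smul, norm_smul, Real.norm_of_nonneg (sub_nonneg.2 (hβ01 k).2),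
      Real.norm_of_nonneg (hβ01 k).1]
  rw [tendsto_iff_norm_sub_tendsto_zero]
  refine tendsto_order.2
    ⟨fun a ha => Eventually.of_forall fun k => ha.trans_le (norm_nonneg _), fun ε hε => ?_⟩
  have hclose : ∀ᶠ k in atTop, ‖c k - L‖ ≤ ε / 2 :=
    (tendsto_iff_norm_sub_tendsto_zero.1 hc).eventually (ge_mem_nhds (half_pos hε))
  refine eventually_lt_of_eventually_le_one_sub_mul_add hβ01 hβsum ?_ (half_lt_self hε)
  filter_upwards [hclose] with k hk
  exact (hstep k).trans (by gcongr; exact (hβ01 k).1)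

theorem stmt10_general
    {S A : Type*} [Fintype S]
    (r : S → A → ℝ) (γ : ℝ)
    (p : S → A → S → ℝ)
    (β : ℕ → ℝ) (hβ01 : ∀ k, β k ∈ Set.Icc (0 : ℝ) 1)
    (hβsum : Tendsto (fun n => ∑ k ∈ Finset.range n, β k) atTop atTop)
    (vh : ℕ → S → ℝ) (v : S → ℝ)
    (hv : ∀ s, Tendsto (fun k => vh k s) atTop (nhds (v s)))
    (Qh : ℕ → S → A → ℝ)
    (hQ : ∀ k s a, Qh (k + 1) s a =
      (1 - β k) * Qh k s a + β k * (r s a + γ * ∑ s', p s a s' * vh k s')) :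
    ∀ s a, Tendsto (fun k => Qh k s a) atTop
      (nhds (r s a + γ * ∑ s', p s a s' * v s')) := by
  intro s a
  have htarget : Tendsto (fun k => r s a + γ * ∑ s', p s a s' * vh k s') atTop
      (𝓝 (r s a + γ * ∑ s', p s a s' * v s')) :=
    tendsto_const_nhds.add
      ((tendsto_finsetSum _ fun s' _ => (hv s').const_mul (p s a s')).const_mul γ)
  exact tendsto_of_eq_one_sub_smul_add_smul hβ01 hβsum htarget fun k => hQ k s a

/-- The model-based Q-update `Q̂_{k+1}(s,a) = (1-β_k) Q̂_k(s,a) +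
β_k (r(s,a) + γ Σ_{s'} p(s'|s,a) v̂_k(s'))` with `β_k ∈ [0,1]`, `β_k → 0`, `Σ β_k = ∞`
and `v̂_k → v` pointwise converges pointwise to the Bellman target
`Q(s,a) = r(s,a) + γ Σ_{s'} p(s'|s,a) v(s')`. -/
theorem stmt10
    {S A : Type*} [Fintype S] [Nonempty S] [Fintype A] [Nonempty A]
    (r : S → A → ℝ) (γ : ℝ) (hγ : 0 ≤ γ ∧ γ < 1)
    (p : S → A → S → ℝ)
    (hp0 : ∀ s a s', 0 ≤ p s a s') (hp1 : ∀ s a, ∑ s', p s a s' = 1)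
    (β : ℕ → ℝ) (hβ01 : ∀ k, β k ∈ Set.Icc (0 : ℝ) 1)
    (hβ0 : Tendsto β atTop (nhds 0))
    (hβsum : Tendsto (fun n => ∑ k ∈ Finset.range n, β k) atTop atTop)
    (vh : ℕ → S → ℝ) (v : S → ℝ)
    (hv : ∀ s, Tendsto (fun k => vh k s) atTop (nhds (v s)))
    (Qh : ℕ → S → A → ℝ)
    (hQ : ∀ k s a, Qh (k + 1) s a =
      (1 - β k) * Qh k s a + β k * (r s a + γ * ∑ s', p s a s' * vh k s')) :
    ∀ s a, Tendsto (fun k => Qh k s a) atTop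
      (nhds (r s a + γ * ∑ s', p s a s' * v s')) :=
  stmt10_general r γ p β hβ01 hβsum vh v hv Qh hQ
end

section
/- Let S be a finite nonempty set of states and consider a two-player game at a fixed state s with finite nonempty action sets A^1, A^2, A = A^1 × A^2. Suppose the stage payoffs satisfy r^1(s,a) + r^2(s,a) = 0 for all a ∈ A, the transition probabilities p(s'|s,a) depend only on the action a^{i_s} of a single controller player i_s ∈ {1,2} (i.e., p(s'|s,a) = p(s'|s,b) whenever a^{i_s} = b^{i_s}), and let γ^1, γ^2 ∈ [0,1) be (possibly different) discount factors and v^1, v^2 : S → ℝ be arbitrary continuation-value functions. Then the auxiliary game with payoffs Q^i(s,a) := r^i(s,a) + γ^i Σ_{s'∈S} p(s'|s,a) v^i(s'), i = 1,2, is strategically equivalent, with scaling constants h^1 = h^2 = 1, to a two-player zero-sum game. -/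
/-- At a state `s` with zero-sum stage payoffs and a single controller
`c` of the transitions, the auxiliary game with payoffs
`Q^i(s,a) = r^i(s,a) + γ^i Σ_{s'} p(s'|s,a) v^i(s')` (possibly different discount factors
and arbitrary continuation values) is strategically equivalent, with unit scaling
constants, to a two-player zero-sum game. -/
theorem stmt12
    {S : Type*} [Fintype S] [Nonempty S]
    {A : Fin 2 → Type*} [∀ i, Fintype (A i)] [∀ i, Nonempty (A i)]
    (s : S)
    (r : Fin 2 → S → (∀ i, A i) → ℝ)
    (hzs : ∀ a, r 0 s a + r 1 s a = 0)
    (p : S → (∀ i, A i) → S → ℝ)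
    (hp0 : ∀ a s', 0 ≤ p s a s') (hp1 : ∀ a, ∑ s', p s a s' = 1)
    (c : Fin 2)
    (hctrl : ∀ a b : ∀ i, A i, a c = b c → ∀ s', p s a s' = p s b s')
    (γ : Fin 2 → ℝ) (hγ : ∀ i, 0 ≤ γ i ∧ γ i < 1)
    (v : Fin 2 → S → ℝ)
    (Q : Fin 2 → (∀ i, A i) → ℝ)
    (hQ : ∀ i a, Q i a = r i s a + γ i * ∑ s', p s a s' * v i s') :
    ∃ Qt : Fin 2 → (∀ i, A i) → ℝ,
      (∀ a, Qt 0 a + Qt 1 a = 0) ∧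
      (∀ i : Fin 2, ∃ φ : (∀ j, A j) → ℝ,
        (∀ a, Qt i a = 1 * Q i a + φ a) ∧
        (∀ a b : ∀ j, A j, (∀ j, j ≠ i → a j = b j) → φ a = φ b)) := by
  refine ⟨fun i a => if i = c then Q c a else -(Q c a), ?_, ?_⟩
  · intro a
    fin_cases c <;> simp
  · intro i
    by_cases hi : i = c
    · subst hi
      exact ⟨fun _ => 0, fun a => by simp, fun _ _ _ => rfl⟩
    · have hr : ∀ x, r c s x + r i s x = 0 := by
        intro x
        have h2 : ∀ j : Fin 2, j = 0 ∨ j = 1 := by decide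
        rcases h2 c with hc | hc <;> rcases h2 i with h | h <;> subst hc <;> subst h <;>
          first | exact absurd rfl hi | linarith [hzs x]
      refine ⟨fun a => -(Q c a) - Q i a, fun a => by simp [hi], ?_⟩
      intro a b hab
      have hc : a c = b c := hab c (Ne.symm hi)
      have hT : ∀ j, ∑ s', p s a s' * v j s' = ∑ s', p s b s' * v j s' := by
        intro j
        exact Finset.sum_congr rfl fun s' _ => by rw [hctrl a b hc s']
      show -Q c a - Q i a = -Q c b - Q i b
      rw [hQ c a, hQ i a, hQ c b, hQ i b, hT c, hT i]
      have h1 := hr a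
      have h2 := hr b
      ring_nf
      linarith
end

section
/- Let S be a finite nonempty set of states and consider an n-player game at a fixed state s with finite nonempty action sets A^1,…,A^n, A = ∏_i A^i. Suppose the stage payoffs are identical, r^i(s,a) = r^j(s,a) for all players i, j and all a ∈ A, the transition probabilities p(s'|s,a) depend only on the action a^{i_s} of a single controller player i_s (i.e., p(s'|s,a) = p(s'|s,b) whenever a^{i_s} = b^{i_s}), and let γ^1,…,γ^n ∈ [0,1) be (possibly different) discount factors and v^1,…,v^n : S → ℝ be arbitrary continuation-value functions. Then the auxiliary game with payoffs Q^i(s,a) := r^i(s,a) + γ^i Σ_{s'∈S} p(s'|s,a) v^i(s') is strategically equivalent, with scaling constants h^i = 1, to an n-player identical-interest game. -/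
/-- At a state `s` with identical stage payoffs and a single controller
`c` of the transitions, the auxiliary game with payoffs
`Q^i(s,a) = r^i(s,a) + γ^i Σ_{s'} p(s'|s,a) v^i(s')` (possibly different discount factors
and arbitrary continuation values) is strategically equivalent, with unit scaling
constants, to an n-player identical-interest game (common payoff `Qt`). -/
theorem stmt13
    {S : Type*} [Fintype S] [Nonempty S]
    {n : ℕ} {A : Fin n → Type*} [∀ i, Fintype (A i)] [∀ i, Nonempty (A i)]
    (s : S)
    (r : Fin n → S → (∀ i, A i) → ℝ)
    (hid : ∀ i j a, r i s a = r j s a)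
    (p : S → (∀ i, A i) → S → ℝ)
    (hp0 : ∀ a s', 0 ≤ p s a s') (hp1 : ∀ a, ∑ s', p s a s' = 1)
    (c : Fin n)
    (hctrl : ∀ a b : ∀ i, A i, a c = b c → ∀ s', p s a s' = p s b s')
    (γ : Fin n → ℝ) (hγ : ∀ i, 0 ≤ γ i ∧ γ i < 1)
    (v : Fin n → S → ℝ)
    (Q : Fin n → (∀ i, A i) → ℝ)
    (hQ : ∀ i a, Q i a = r i s a + γ i * ∑ s', p s a s' * v i s') :
    ∃ Qt : (∀ i, A i) → ℝ,
      ∀ i : Fin n, ∃ φ : (∀ j, A j) → ℝ,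
        (∀ a, Qt a = 1 * Q i a + φ a) ∧
        (∀ a b : ∀ j, A j, (∀ j, j ≠ i → a j = b j) → φ a = φ b) := by
  refine ⟨Q c, fun i => ⟨fun a => Q c a - Q i a, fun a => by ring, ?_⟩⟩
  intro a b hab
  by_cases hic : i = c
  · subst hic; ring
  · have hc : a c = b c := hab c (fun h => hic h.symm)
    have hpp : ∀ s', p s a s' = p s b s' := hctrl a b hc
    have hra : r c s a = r i s a := hid c i a
    have hrb : r c s b = r i s b := hid c i b
    simp only [hQ, hra, hrb]
    simp only [hpp]
    ring
end
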